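/- arXiv:math/0611899 — 2 statements merged into one kernel-verified Lean document; each statement's English description precedes it below -/
import Mathlib

section
/- Suppose smooth matrix-valued functions R and S_{i,j} and constants c_0,…,c_m satisfy 2∂_x S_{m−2−j,j} + 2∂_y S_{m−1−j,j−1} = c_j(m−j)∂_x R + c_{j+1}(j+1)∂_y R for all j = 0,…,m−1 (with out-of-range S equal to 0). Then R satisfies the constant-coefficient PDE D(∂_y, −∂_x) R = 0, where D(ξ,τ) = (ξ ∂/∂τ − τ ∂/∂ξ) Σ_{i=0}^m c_i ξ^{m−i} τ^i. -/
/-- Partial derivative in `x` of a scalar function of two real variables. -/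
noncomputable def pdx (u : ℝ → ℝ → ℂ) : ℝ → ℝ → ℂ := fun x y => deriv (fun s => u s y) x

/-- Partial derivative in `y`. -/
noncomputable def pdy (u : ℝ → ℝ → ℂ) : ℝ → ℝ → ℂ := fun x y => deriv (fun s => u x s) y

/-- Iterated partial derivative `∂_x^a ∂_y^b`. -/
noncomputable def pd (a b : ℕ) (u : ℝ → ℝ → ℂ) : ℝ → ℝ → ℂ := pdx^[a] (pdy^[b] u)

/- If smooth matrix-valued `R`, `S_{i,j}` and constants `c_i` satisfy the family
   of equations
   `2∂_x S_{m−2−j,j} + 2∂_y S_{m−1−j,j−1} = c_j(m−j)∂_x R + c_{j+1}(j+1)∂_y R`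
   for `j = 0,…,m−1`, then `R` satisfies the constant-coefficient PDE
   `D(∂_y, −∂_x) R = 0`, where `D(ξ,τ) = (ξ∂_τ − τ∂_ξ) Σ_{i=0}^m c_i ξ^{m−i}τ^i`;
   expanded,
   `Σ_i c_i·i·(−1)^{i−1} ∂_x^{i−1}∂_y^{m+1−i} R
     − Σ_i c_i·(m−i)·(−1)^{i+1} ∂_x^{i+1}∂_y^{m−1−i} R = 0`. -/
def Sm (u : ℝ → ℝ → ℂ) : Prop := ContDiff ℝ (⊤ : ℕ∞) (fun v : ℝ × ℝ => u v.1 v.2)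

lemma hasDerivAt_slice_x {U : ℝ × ℝ → ℂ} {x y : ℝ} (h : DifferentiableAt ℝ U (x, y)) :
    HasDerivAt (fun s => U (s, y)) (fderiv ℝ U (x, y) (1, 0)) x := by
  have := h.hasFDerivAt.comp_hasDerivAt x ((hasDerivAt_id x).prodMk (hasDerivAt_const x y))
  exact this

lemma hasDerivAt_slice_y {U : ℝ × ℝ → ℂ} {x y : ℝ} (h : DifferentiableAt ℝ U (x, y)) :
    HasDerivAt (fun s => U (x, s)) (fderiv ℝ U (x, y) (0, 1)) y := by
  have := h.hasFDerivAt.comp_hasDerivAt y ((hasDerivAt_const y x).prodMk (hasDerivAt_id y))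
  exact this

lemma Sm.pdx_eq {u : ℝ → ℝ → ℂ} (hu : Sm u) (x y : ℝ) :
    pdx u x y = fderiv ℝ (fun v : ℝ × ℝ => u v.1 v.2) (x, y) (1, 0) :=
  (hasDerivAt_slice_x ((hu.differentiable (by simp)) (x, y))).deriv

lemma Sm.pdy_eq {u : ℝ → ℝ → ℂ} (hu : Sm u) (x y : ℝ) :
    pdy u x y = fderiv ℝ (fun v : ℝ × ℝ => u v.1 v.2) (x, y) (0, 1) :=
  (hasDerivAt_slice_y ((hu.differentiable (by simp)) (x, y))).deriv

lemma Sm.pdx {u : ℝ → ℝ → ℂ} (hu : Sm u) : Sm (_root_.pdx u) := by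
  have : (fun v : ℝ × ℝ => _root_.pdx u v.1 v.2)
      = fun v => fderiv ℝ (fun v : ℝ × ℝ => u v.1 v.2) v (1, 0) := by
    funext v
    exact hu.pdx_eq v.1 v.2
  rw [Sm, this]
  exact (hu.fderiv_right (by simp)).clm_apply contDiff_const

lemma Sm.pdy {u : ℝ → ℝ → ℂ} (hu : Sm u) : Sm (_root_.pdy u) := by
  have : (fun v : ℝ × ℝ => _root_.pdy u v.1 v.2)
      = fun v => fderiv ℝ (fun v : ℝ × ℝ => u v.1 v.2) v (0, 1) := by
    funext v
    exact hu.pdy_eq v.1 v.2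
  rw [Sm, this]
  exact (hu.fderiv_right (by simp)).clm_apply contDiff_const

lemma Sm.comm {u : ℝ → ℝ → ℂ} (hu : Sm u) : _root_.pdx (_root_.pdy u) = _root_.pdy (_root_.pdx u) := by
  funext x y
  set U : ℝ × ℝ → ℂ := fun v => u v.1 v.2 with hU
  set f' : ℝ × ℝ → (ℝ × ℝ) →L[ℝ] ℂ := fderiv ℝ U with hf'
  have hdU : ∀ v, HasFDerivAt U (f' v) v := fun v =>
    ((hu.differentiable (by simp)) v).hasFDerivAt
  have hf's : ContDiff ℝ (⊤ : ℕ∞) f' := hu.fderiv_right (by simp)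
  set f'' := fderiv ℝ f' (x, y) with hf''
  have hd2 : HasFDerivAt f' f'' (x, y) := ((hf's.differentiable (by simp)) (x, y)).hasFDerivAt
  have symm := second_derivative_symmetric hdU hd2
  have key : ∀ w w' : ℝ × ℝ,
      fderiv ℝ (fun v => f' v w) (x, y) w' = f'' w' w := by
    intro w w'
    have : HasFDerivAt (fun v => f' v w) ((ContinuousLinearMap.apply ℝ ℂ w).comp f'') (x, y) :=
      (ContinuousLinearMap.apply ℝ ℂ w).hasFDerivAt.comp (x, y) hd2
    rw [this.fderiv]; rfl
  have e1 : _root_.pdx (_root_.pdy u) x y = f'' (1, 0) (0, 1) := by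
    have h1 := (hu.pdy).pdx_eq x y
    have h2 : (fun v : ℝ × ℝ => _root_.pdy u v.1 v.2) = fun v => f' v (0, 1) := by
      funext v; exact hu.pdy_eq v.1 v.2
    rw [h1, h2, key]
  have e2 : _root_.pdy (_root_.pdx u) x y = f'' (0, 1) (1, 0) := by
    have h1 := (hu.pdx).pdy_eq x y
    have h2 : (fun v : ℝ × ℝ => _root_.pdx u v.1 v.2) = fun v => f' v (1, 0) := by
      funext v; exact hu.pdx_eq v.1 v.2
    rw [h1, h2, key]
  rw [e1, e2, symm]

def comb (α β : ℂ) (u v : ℝ → ℝ → ℂ) : ℝ → ℝ → ℂ := fun x y => α * u x y + β * v x y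

lemma Sm.comb {α β : ℂ} {u v : ℝ → ℝ → ℂ} (hu : Sm u) (hv : Sm v) : Sm (_root_.comb α β u v) :=
  (contDiff_const.mul hu).add (contDiff_const.mul hv)

lemma Sm.diffx {u : ℝ → ℝ → ℂ} (hu : Sm u) (x y : ℝ) : DifferentiableAt ℝ (fun s => u s y) x :=
  (hasDerivAt_slice_x ((hu.differentiable (by simp)) (x, y))).differentiableAt

lemma Sm.diffy {u : ℝ → ℝ → ℂ} (hu : Sm u) (x y : ℝ) : DifferentiableAt ℝ (fun s => u x s) y :=
  (hasDerivAt_slice_y ((hu.differentiable (by simp)) (x, y))).differentiableAt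

lemma pdx_comb {α β : ℂ} {u v : ℝ → ℝ → ℂ} (hu : Sm u) (hv : Sm v) :
    pdx (comb α β u v) = comb α β (pdx u) (pdx v) := by
  funext x y
  show deriv (fun s => α * u s y + β * v s y) x = _
  rw [deriv_fun_add ((hu.diffx x y).const_mul α) ((hv.diffx x y).const_mul β),
    deriv_const_mul α (hu.diffx x y), deriv_const_mul β (hv.diffx x y)]
  rfl

lemma pdy_comb {α β : ℂ} {u v : ℝ → ℝ → ℂ} (hu : Sm u) (hv : Sm v) :
    pdy (comb α β u v) = comb α β (pdy u) (pdy v) := by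
  funext x y
  show deriv (fun s => α * u x s + β * v x s) y = _
  rw [deriv_fun_add ((hu.diffy x y).const_mul α) ((hv.diffy x y).const_mul β),
    deriv_const_mul α (hu.diffy x y), deriv_const_mul β (hv.diffy x y)]
  rfl

lemma Sm.pdyIter {u : ℝ → ℝ → ℂ} (hu : Sm u) (b : ℕ) : Sm (_root_.pdy^[b] u) := by
  induction b with
  | zero => exact hu
  | succ n ih => rw [Function.iterate_succ_apply']; exact ih.pdy

lemma Sm.pdxIter {u : ℝ → ℝ → ℂ} (hu : Sm u) (a : ℕ) : Sm (_root_.pdx^[a] u) := by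
  induction a with
  | zero => exact hu
  | succ n ih => rw [Function.iterate_succ_apply']; exact ih.pdx

lemma Sm.pd {u : ℝ → ℝ → ℂ} (hu : Sm u) (a b : ℕ) : Sm (_root_.pd a b u) :=
  (hu.pdyIter b).pdxIter a

lemma pdyIter_pdx {u : ℝ → ℝ → ℂ} (hu : Sm u) (b : ℕ) :
    pdy^[b] (pdx u) = pdx (pdy^[b] u) := by
  induction b with
  | zero => rfl
  | succ n ih =>
      rw [Function.iterate_succ_apply', Function.iterate_succ_apply', ih,
        (hu.pdyIter n).comm]

lemma pd_pdx {u : ℝ → ℝ → ℂ} (hu : Sm u) (a b : ℕ) :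
    pd a b (pdx u) = pd (a + 1) b u := by
  show pdx^[a] (pdy^[b] (pdx u)) = pdx^[a+1] (pdy^[b] u)
  rw [Function.iterate_succ_apply, pdyIter_pdx hu]

lemma pd_pdy (u : ℝ → ℝ → ℂ) (a b : ℕ) : pd a b (pdy u) = pd a (b + 1) u := by
  show pdx^[a] (pdy^[b] (pdy u)) = pdx^[a] (pdy^[b+1] u)
  rw [Function.iterate_succ_apply]

lemma pdxIter_comb {α β : ℂ} {u v : ℝ → ℝ → ℂ} (hu : Sm u) (hv : Sm v) (a : ℕ) :
    pdx^[a] (comb α β u v) = comb α β (pdx^[a] u) (pdx^[a] v) := by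
  induction a with
  | zero => rfl
  | succ n ih =>
      rw [Function.iterate_succ_apply', Function.iterate_succ_apply',
        Function.iterate_succ_apply', ih, pdx_comb (hu.pdxIter n) (hv.pdxIter n)]

lemma pdyIter_comb {α β : ℂ} {u v : ℝ → ℝ → ℂ} (hu : Sm u) (hv : Sm v) (b : ℕ) :
    pdy^[b] (comb α β u v) = comb α β (pdy^[b] u) (pdy^[b] v) := by
  induction b with
  | zero => rfl
  | succ n ih =>
      rw [Function.iterate_succ_apply', Function.iterate_succ_apply',
        Function.iterate_succ_apply', ih, pdy_comb (hu.pdyIter n) (hv.pdyIter n)]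

lemma pd_comb {α β : ℂ} {u v : ℝ → ℝ → ℂ} (hu : Sm u) (hv : Sm v) (a b : ℕ) :
    pd a b (comb α β u v) = comb α β (pd a b u) (pd a b v) := by
  show pdx^[a] (pdy^[b] _) = _
  rw [pdyIter_comb hu hv, pdxIter_comb (hu.pdyIter b) (hv.pdyIter b)]
  rfl

lemma pdx_zero : pdx (fun _ _ => (0 : ℂ)) = fun _ _ => 0 := by
  funext x y; exact deriv_const x 0

lemma pdy_zero : pdy (fun _ _ => (0 : ℂ)) = fun _ _ => 0 := by
  funext x y; exact deriv_const y 0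

lemma pd_zero (a b : ℕ) : pd a b (fun _ _ => (0 : ℂ)) = fun _ _ => 0 := by
  show pdx^[a] (pdy^[b] _) = _
  have h1 : pdy^[b] (fun _ _ => (0:ℂ)) = fun _ _ => 0 := by
    induction b with
    | zero => rfl
    | succ n ih => rw [Function.iterate_succ_apply', ih, pdy_zero]
  rw [h1]
  induction a with
  | zero => rfl
  | succ n ih => rw [Function.iterate_succ_apply', ih, pdx_zero]

lemma key {u v f : ℝ → ℝ → ℂ} (hu : Sm u) (hv : Sm v) (hf : Sm f) {α β : ℂ}
    (h : ∀ x y, 2 * pdx u x y + 2 * pdy v x y = α * pdx f x y + β * pdy f x y)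
    (a b : ℕ) (x y : ℝ) :
    2 * pd (a+1) b u x y + 2 * pd a (b+1) v x y
      = α * pd (a+1) b f x y + β * pd a (b+1) f x y := by
  have hfun : comb 2 2 (pdx u) (pdy v) = comb α β (pdx f) (pdy f) := by
    funext x y
    simpa [comb] using h x y
  have h2 := congrArg (pd a b) hfun
  rw [pd_comb hu.pdx hv.pdy a b, pd_comb hf.pdx hf.pdy a b, pd_pdx hu, pd_pdy,
    pd_pdx hf, pd_pdy] at h2
  have h3 := congrFun (congrFun h2 x) y
  simpa [comb] using h3

theorem stmt_9 (l m : ℕ) (c : ℕ → ℂ)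
    (R : ℝ → ℝ → Matrix (Fin l) (Fin l) ℂ)
    (S : ℕ → ℕ → ℝ → ℝ → Matrix (Fin l) (Fin l) ℂ)
    (hR : ∀ p q : Fin l, ContDiff ℝ (⊤ : ℕ∞) fun v : ℝ × ℝ => R v.1 v.2 p q)
    (hS : ∀ i j : ℕ, ∀ p q : Fin l, ContDiff ℝ (⊤ : ℕ∞) fun v : ℝ × ℝ => S i j v.1 v.2 p q)
    (hSv : ∀ i j : ℕ, m ≤ i + j + 1 → S i j = 0)
    (heq : ∀ j : ℕ, j < m → ∀ x y : ℝ, ∀ p q : Fin l,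
      2 * deriv (fun s => S (m - 2 - j) j s y p q) x
        + 2 * deriv (fun s => S (m - 1 - j) (j - 1) x s p q) y
      = c j * ((m - j : ℕ) : ℂ) * deriv (fun s => R s y p q) x
        + c (j + 1) * ((j + 1 : ℕ) : ℂ) * deriv (fun s => R x s p q) y) :
    ∀ x y : ℝ, ∀ p q : Fin l,
      (∑ i ∈ Finset.range (m + 1),
          c i * (i : ℂ) * (-1 : ℂ) ^ (i - 1) *
            pd (i - 1) (m + 1 - i) (fun a b => R a b p q) x y)
        - (∑ i ∈ Finset.range (m + 1),
          c i * ((m - i : ℕ) : ℂ) * (-1 : ℂ) ^ (i + 1) *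
            pd (i + 1) (m - 1 - i) (fun a b => R a b p q) x y) = 0 := by
  intro x y p q
  set f : ℝ → ℝ → ℂ := fun a b => R a b p q with hfdef
  have hf : Sm f := hR p q
  set g : ℕ → ℂ := fun j =>
    (-1 : ℂ) ^ j * (2 * pd j (m - j) (fun a b => S (m - 1 - j) (j - 1) a b p q) x y) with hgdef
  have hg0 : g 0 = 0 := by
    have h0 : (fun a b : ℝ => S (m - 1 - 0) (0 - 1) a b p q) = fun _ _ => (0 : ℂ) := by
      funext a b
      rw [hSv (m - 1 - 0) (0 - 1) (by omega)]
      simp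
    simp only [hgdef, h0, pd_zero]
    simp
  have hgm : g m = 0 := by
    have h0 : (fun a b : ℝ => S (m - 1 - m) (m - 1) a b p q) = fun _ _ => (0 : ℂ) := by
      funext a b
      rw [hSv (m - 1 - m) (m - 1) (by omega)]
      simp
    simp only [hgdef, h0, pd_zero]
    simp
  have hstep : ∀ j, j < m → g j - g (j + 1)
      = (-1 : ℂ) ^ j * (c j * ((m - j : ℕ) : ℂ) * pd (j + 1) (m - 1 - j) f x y
        + c (j + 1) * ((j + 1 : ℕ) : ℂ) * pd j (m - j) f x y) := by
    intro j hj
    have hA : Sm (fun a b => S (m - 2 - j) j a b p q) := hS _ _ p q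
    have hB : Sm (fun a b => S (m - 1 - j) (j - 1) a b p q) := hS _ _ p q
    have h := key hA hB hf (fun x' y' => heq j hj x' y' p q) j (m - 1 - j) x y
    rw [show m - 1 - j + 1 = m - j from by omega] at h
    have hrw : g j - g (j + 1)
        = (-1 : ℂ) ^ j * (2 * pd (j + 1) (m - 1 - j) (fun a b => S (m - 2 - j) j a b p q) x y
          + 2 * pd j (m - j) (fun a b => S (m - 1 - j) (j - 1) a b p q) x y) := by
      simp only [hgdef, show m - (j + 1) = m - 1 - j from by omega,
        show m - 1 - (j + 1) = m - 2 - j from by omega, Nat.add_sub_cancel]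
      ring
    rw [hrw, h]
  have sum0 : ∑ j ∈ Finset.range m,
      ((-1 : ℂ) ^ j * (c j * ((m - j : ℕ) : ℂ) * pd (j + 1) (m - 1 - j) f x y
        + c (j + 1) * ((j + 1 : ℕ) : ℂ) * pd j (m - j) f x y)) = 0 := by
    calc ∑ j ∈ Finset.range m,
        ((-1 : ℂ) ^ j * (c j * ((m - j : ℕ) : ℂ) * pd (j + 1) (m - 1 - j) f x y
          + c (j + 1) * ((j + 1 : ℕ) : ℂ) * pd j (m - j) f x y))
        = ∑ j ∈ Finset.range m, (g j - g (j + 1)) :=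
          Finset.sum_congr rfl fun j hj => (hstep j (Finset.mem_range.mp hj)).symm
      _ = g 0 - g m := Finset.sum_range_sub' g m
      _ = 0 := by rw [hg0, hgm, sub_zero]
  rw [Finset.sum_range_succ' _ m, Finset.sum_range_succ]
  simp only [Nat.cast_zero, mul_zero, zero_mul, Nat.sub_self, add_zero, Nat.cast_ofNat]
  rw [← sum0, ← Finset.sum_sub_distrib]
  apply Finset.sum_congr rfl
  intro j hj
  simp only [Nat.add_sub_cancel, show m + 1 - (j + 1) = m - j from by omega]
  ring
end

section
/- (Majorant bound gives convergence.) Let b ∈ ℂ[X] of degree r with b(k) ≠ 0 for all k ≥ 1, and suppose there exist ε > 0 with |b(k)| ≥ ε k^r for all k ≥ 1, and constants C, K > 0 with |c_{k,j}| ≤ C K^{k−j} k^r for all 1 ≤ j < k. Then the unique solution (u_k) of b(k)u_k + Σ_{j<k} c_{k,j}u_j = 0 with given u₀ satisfies |u_k| ≤ |u₀| M^k for some M > 0 depending only on ε, C, K, r; in particular Σ u_k t^k has positive radius of convergence. -/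
/-!
Dividing the recursion by `b(k)` and using `|b(k)| ≥ ε k^r`, the factor `k^r` in the bound on
`c_{k,j}` cancels, so `a_k = |u_k|` satisfies the majorant inequality
`a_k ≤ (C/ε) Σ_{j<k} K^{k-j} a_j`. With `q = 1 + C/ε`, the geometric sum
`(C/ε) Σ_{j<k} q^j = q^k - 1` closes a strong induction for `a_k ≤ a_0 (K q)^k`.
-/

open Finset

theorem mul_geom_sum_one_add {R : Type*} [CommRing R] (d : R) (n : ℕ) :
    d * ∑ j ∈ range n, (1 + d) ^ j = (1 + d) ^ n - 1 := by
  rw [mul_comm, ← geom_sum_mul]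
  ring

theorem le_mul_pow_of_le_mul_sum {a : ℕ → ℝ} {D K : ℝ} (hD : 0 ≤ D) (hK : 0 ≤ K)
    (ha0 : 0 ≤ a 0) (ha : ∀ k, 1 ≤ k → a k ≤ D * ∑ j ∈ range k, K ^ (k - j) * a j) (k : ℕ) :
    a k ≤ a 0 * (K * (1 + D)) ^ k := by
  induction k using Nat.strong_induction_on with
  | _ k ih =>
    rcases Nat.eq_zero_or_pos k with rfl | hk
    · simp
    have hsplit : ∀ j ∈ range k, K ^ (k - j) * (a 0 * (K * (1 + D)) ^ j)
        = a 0 * K ^ k * (1 + D) ^ j := fun j hj => by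
      rw [mul_pow, ← pow_sub_mul_pow K (mem_range.1 hj).le]
      ring
    calc a k ≤ D * ∑ j ∈ range k, K ^ (k - j) * a j := ha k hk
      _ ≤ D * ∑ j ∈ range k, K ^ (k - j) * (a 0 * (K * (1 + D)) ^ j) := by
        gcongr with j hj
        exact ih j (mem_range.1 hj)
      _ = a 0 * K ^ k * ((1 + D) ^ k - 1) := by
        rw [sum_congr rfl hsplit, ← mul_sum, ← mul_geom_sum_one_add]
        ring
      _ ≤ a 0 * (K * (1 + D)) ^ k := by
        rw [mul_pow, ← mul_assoc]
        have : 0 ≤ a 0 * K ^ k := by positivity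
        gcongr
        linarith

theorem norm_mul_le_sum_of_mul_add_sum_eq_zero {𝕜 ι : Type*} [NormedField 𝕜] {s : Finset ι}
    {β x : 𝕜} {γ y : ι → 𝕜} (h : β * x + ∑ i ∈ s, γ i * y i = 0) :
    ‖β‖ * ‖x‖ ≤ ∑ i ∈ s, ‖γ i‖ * ‖y i‖ := by
  rw [← norm_mul, eq_neg_of_add_eq_zero_left h, norm_neg]
  exact (norm_sum_le _ _).trans_eq (by simp only [norm_mul])

theorem norm_le_majorant_of_recursion {r k : ℕ} {ε C K : ℝ} (hε : 0 < ε) (hk : 1 ≤ k)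
    {β : ℂ} {c u : ℕ → ℂ} (hβ : ε * (k : ℝ) ^ r ≤ ‖β‖)
    (hc : ∀ j < k, ‖c j‖ ≤ C * K ^ (k - j) * (k : ℝ) ^ r)
    (hrec : β * u k + ∑ j ∈ range k, c j * u j = 0) :
    ‖u k‖ ≤ C / ε * ∑ j ∈ range k, K ^ (k - j) * ‖u j‖ := by
  have hkr : (0 : ℝ) < (k : ℝ) ^ r := by
    have : (0 : ℝ) < k := by exact_mod_cast hk
    positivity
  suffices ε * (k : ℝ) ^ r * ‖u k‖ ≤ ε * (k : ℝ) ^ r * (C / ε * ∑ j ∈ range k, K ^ (k - j) * ‖u j‖)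
    from le_of_mul_le_mul_left this (by positivity)
  calc ε * (k : ℝ) ^ r * ‖u k‖ ≤ ‖β‖ * ‖u k‖ := by gcongr
    _ ≤ ∑ j ∈ range k, ‖c j‖ * ‖u j‖ := norm_mul_le_sum_of_mul_add_sum_eq_zero hrec
    _ ≤ ∑ j ∈ range k, C * K ^ (k - j) * (k : ℝ) ^ r * ‖u j‖ := by
      gcongr with j hj
      exact hc j (mem_range.1 hj)
    _ = ε * (k : ℝ) ^ r * (C / ε * ∑ j ∈ range k, K ^ (k - j) * ‖u j‖) := by
      rw [mul_sum, mul_sum]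
      refine sum_congr rfl fun j _ => ?_
      field_simp

theorem stmt_14 (r : ℕ) (ε C K : ℝ) (hε : 0 < ε) (hC : 0 < C) (hK : 0 < K) :
    ∃ M : ℝ, 0 < M ∧
      ∀ (b : Polynomial ℂ) (c : ℕ → ℕ → ℂ) (u : ℕ → ℂ),
        b.natDegree = r →
        (∀ k : ℕ, 1 ≤ k → ε * (k : ℝ) ^ r ≤ ‖b.eval (k : ℂ)‖) →
        (∀ k j : ℕ, j < k → ‖c k j‖ ≤ C * K ^ (k - j) * (k : ℝ) ^ r) →
        (∀ k : ℕ, 1 ≤ k →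
          b.eval (k : ℂ) * u k + ∑ j ∈ Finset.range k, c k j * u j = 0) →
        ∀ k : ℕ, ‖u k‖ ≤ ‖u 0‖ * M ^ k := by
  refine ⟨K * (1 + C / ε), by positivity, fun b c u _ hb hc hrec => ?_⟩
  refine le_mul_pow_of_le_mul_sum (by positivity) hK.le (norm_nonneg _) fun k hk => ?_
  exact norm_le_majorant_of_recursion hε hk (hb k hk) (hc k) (hrec k hk)
end
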